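/- For any cyclic permutation (i,j,k) of (1,2,3) one has e_i·e_j ∈ U₁ e_k and e_j·e_i = −(e_i·e_j). Moreover there exists u ∈ U₁ such that, setting σ = σ_{(1,1,1,u)} (coordinatewise multiplication by (1,1,1,u)), the multiplication x ⋆ y = σ⁻¹(σ(x)·σ(y)) satisfies e_i ⋆ e_j = e_k = −(e_j ⋆ e_i) for every cyclic permutation (i,j,k) of (1,2,3), retains the Lagrange identity, the identity element e₀ and the property (a e₀) ⋆ y = a y, and σ : (E,⋆) → (E,·) is an isomorphism of unital A₀-algebras. -/

import Mathlib

open LaurentPolynomial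

/-- `A = ℤ[z, z⁻¹]`, the Laurent polynomial ring over the integers. -/
abbrev A : Type := LaurentPolynomial ℤ

/-- The conjugation `f(z) ↦ f(z⁻¹)` on `A`. -/
noncomputable def conj : A →+* A := (LaurentPolynomial.invert (R := ℤ)).toRingEquiv.toRingHom

/-- The fixed subring `A₀ = {f ∈ A | f* = f}`. -/
noncomputable def A0 : Subring A := RingHom.eqLocus conj (RingHom.id A)

/-- `E = A⁴`. -/
abbrev E : Type := Fin 4 → A

/-- The norm `N(x) = ∑ₖ xₖ xₖ*`. -/
noncomputable def N (x : E) : A := ∑ k, x k * conj (x k)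

/-- The standard `A`-basis vectors of `E = A⁴`. -/
noncomputable def e (k : Fin 4) : E := Pi.single k 1

/-- Yang's multiplication `x ∘ y = (p, q, r, s)`. -/
noncomputable def yang (x y : E) : E :=
  ![x 0 * y 0 - x 1 * conj (y 1) - x 2 * conj (y 2) - x 3 * conj (y 3),
    x 0 * y 1 + x 1 * conj (y 0) + conj (x 2) * conj (y 3) - conj (x 3) * conj (y 2),
    x 0 * y 2 - conj (x 1) * conj (y 3) + x 2 * conj (y 0) + conj (x 3) * conj (y 1),
    x 0 * y 3 + conj (x 1) * conj (y 2) - conj (x 2) * conj (y 1) + x 3 * conj (y 0)]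

/-- `(i,j,k)` is a cyclic permutation of `(1,2,3)`. -/
def Cyc (i j k : Fin 4) : Prop :=
  (i, j, k) = (1, 2, 3) ∨ (i, j, k) = (2, 3, 1) ∨ (i, j, k) = (3, 1, 2)

/-!
Polarizing the Lagrange identity gives the identities of a composition algebra for the form
`B x y = N (x + y) - N x - N y`, e.g. `B (x y) (x w) = N x * B y w`. The norm is anisotropic, since
the constant term of `f f*` is the sum of the squares of the coefficients of `f`; hence `B` is
nondegenerate and every `x` satisfies `x (x y) = tr x • x y - N x • y` and its mirror image. So the
`eᵢ` with `i ≠ 0` square to `-e₀` and anticommute. The product `eᵢ eⱼ` has norm one and is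
orthogonal to `e₀, eᵢ, eⱼ`; by the same constant-term argument a vector of norm one is `u • eₘ`
with `u u* = 1`, and then `B (u • eₘ) eₘ = u + u*` is nonzero (evaluate at `z = 1`), so `m = k`.
Finally, if `e₁ e₂ = u • e₃`, the twist by `σ x = (1, 1, 1, u) * x` (a product in the ring `E`)
sends `e₃` to `e₁ e₂`, and the table becomes that of the quaternions.
-/

lemma conj_conj (f : A) : conj (conj f) = f := involutive_invert f

lemma coeff_zero_mul_conj (f : A) :
    (f * conj f).coeff 0 = ∑ n ∈ f.coeff.support, f.coeff n ^ 2 := by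
  rw [AddMonoidAlgebra.coeff_mul_apply_left, Finsupp.sum]
  refine Finset.sum_congr rfl fun n _ => ?_
  rw [conj, RingEquiv.toRingHom_eq_coe, RingHom.coe_coe, AlgEquiv.coe_ringEquiv, invert_apply]
  simp [sq]

lemma coeff_zero_mul_conj_nonneg (f : A) : 0 ≤ (f * conj f).coeff 0 := by
  rw [coeff_zero_mul_conj]; positivity

lemma eq_zero_of_coeff_zero_mul_conj_eq_zero {f : A} (h : (f * conj f).coeff 0 = 0) : f = 0 := by
  rw [coeff_zero_mul_conj, Finset.sum_eq_zero_iff_of_nonneg fun _ _ => sq_nonneg _] at h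
  ext n
  by_contra hn
  exact hn (pow_eq_zero_iff two_ne_zero |>.mp (h n (Finsupp.mem_support_iff.mpr hn)))

lemma eval_conj (f : A) : eval₂ (RingHom.id ℤ) 1 (conj f) = eval₂ (RingHom.id ℤ) 1 f := by
  induction f using LaurentPolynomial.induction_on' with
  | add p q hp hq => rw [map_add, map_add, map_add, hp, hq]
  | C_mul_T n a => simp [conj]

lemma add_conj_ne_zero {u : A} (hu : u * conj u = 1) : u + conj u ≠ 0 := by
  intro h
  have h1 := congrArg (eval₂ (RingHom.id ℤ) 1) hu
  have h0 := congrArg (eval₂ (RingHom.id ℤ) 1) h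
  rw [map_mul, map_one, eval_conj] at h1
  rw [map_add, map_zero, eval_conj] at h0
  nlinarith

noncomputable def B (x y : E) : A := ∑ k, (x k * conj (y k) + conj (x k) * y k)

noncomputable def tr (x : E) : A := B x (e 0)

lemma N_add (x y : E) : N (x + y) = N x + N y + B x y := by
  simp only [N, B, Pi.add_apply, map_add, ← Finset.sum_add_distrib]
  exact Finset.sum_congr rfl fun k _ => by ring

lemma B_comm (x y : E) : B x y = B y x :=
  Finset.sum_congr rfl fun k _ => by ring

lemma B_add_left (x y z : E) : B (x + y) z = B x z + B y z := by
  simp only [B, Pi.add_apply, map_add, ← Finset.sum_add_distrib]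
  exact Finset.sum_congr rfl fun k _ => by ring

lemma B_add_right (x y z : E) : B x (y + z) = B x y + B x z := by
  rw [B_comm, B_add_left, B_comm y, B_comm z]

lemma B_sub_left (x y z : E) : B (x - y) z = B x z - B y z := by
  simp only [B, Pi.sub_apply, map_sub, ← Finset.sum_sub_distrib]
  exact Finset.sum_congr rfl fun k _ => by ring

lemma B_smul_left {a : A} (ha : conj a = a) (x y : E) : B (a • x) y = a * B x y := by
  simp only [B, Pi.smul_apply, smul_eq_mul, map_mul, ha, Finset.mul_sum]
  exact Finset.sum_congr rfl fun k _ => by ring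

lemma B_self (x : E) : B x x = 2 * N x := by
  simp only [B, N, Finset.mul_sum]
  exact Finset.sum_congr rfl fun k _ => by ring

lemma B_e_right (x : E) (l : Fin 4) : B x (e l) = x l + conj (x l) := by
  rw [B, Finset.sum_eq_single l]
  · simp [e]
  · intro j _ hj; simp [e, hj]
  · simp

lemma conj_N (x : E) : conj (N x) = N x := by
  simp only [N, map_sum, map_mul, conj_conj]
  exact Finset.sum_congr rfl fun k _ => by ring

lemma conj_tr (x : E) : conj (tr x) = tr x := by
  rw [tr, B_e_right, map_add, conj_conj, add_comm]

lemma smul_e_apply (a : A) (k j : Fin 4) : (a • e k) j = if j = k then a else 0 := by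
  simp [e, Pi.single_apply]

lemma N_smul_e (a : A) (k : Fin 4) : N (a • e k) = a * conj a := by
  rw [N, Finset.sum_eq_single k]
  · simp [e]
  · intro j _ hj; simp [e, hj]
  · simp

lemma coeff_zero_N (x : E) : (N x).coeff 0 = ∑ k, (x k * conj (x k)).coeff 0 := by
  rw [N, AddMonoidAlgebra.coeff_sum, Finsupp.finsetSum_apply]

lemma eq_zero_of_N_eq_zero {x : E} (h : N x = 0) : x = 0 := by
  have hc := coeff_zero_N x
  rw [h, AddMonoidAlgebra.coeff_zero, Finsupp.zero_apply, eq_comm,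
    Finset.sum_eq_zero_iff_of_nonneg fun k _ => coeff_zero_mul_conj_nonneg (x k)] at hc
  exact funext fun k => eq_zero_of_coeff_zero_mul_conj_eq_zero (hc k (Finset.mem_univ k))

lemma eq_zero_of_forall_B_eq_zero {w : E} (h : ∀ z, B w z = 0) : w = 0 := by
  have h2 : (2 : A) ≠ 0 := fun h2 => by
    have := congrArg (eval₂ (RingHom.id ℤ) 1) h2
    rw [map_ofNat, map_zero] at this
    exact absurd this (by norm_num)
  have hw := h w
  rw [B_self, mul_eq_zero] at hw
  exact eq_zero_of_N_eq_zero (hw.resolve_left h2)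

lemma exists_eq_smul_e_of_N_eq_one {x : E} (h : N x = 1) :
    ∃ k u, u * conj u = 1 ∧ x = u • e k := by
  have hc := coeff_zero_N x
  rw [h, AddMonoidAlgebra.coeff_one_zero] at hc
  obtain ⟨k, -, hk⟩ := Finset.exists_ne_zero_of_sum_ne_zero (hc ▸ one_ne_zero)
  have hx : x = x k • e k := by
    funext j
    rw [smul_e_apply]
    split_ifs with hj
    · rw [hj]
    · have hle := Finset.add_le_sum (fun i _ => coeff_zero_mul_conj_nonneg (x i))
        (Finset.mem_univ j) (Finset.mem_univ k) hj
      rw [← hc] at hle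
      have := coeff_zero_mul_conj_nonneg (x j)
      have := coeff_zero_mul_conj_nonneg (x k)
      exact eq_zero_of_coeff_zero_mul_conj_eq_zero (by omega)
  exact ⟨k, x k, by rw [← N_smul_e, ← hx, h], hx⟩

lemma N_e (k : Fin 4) : N (e k) = 1 := by
  simpa using N_smul_e 1 k

lemma B_e_e {i j : Fin 4} (hij : i ≠ j) : B (e i) (e j) = 0 := by
  rw [B_e_right, e, Pi.single_eq_of_ne hij.symm, map_zero, add_zero]

lemma tr_e {i : Fin 4} (hi : i ≠ 0) : tr (e i) = 0 := B_e_e hi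

lemma Cyc.ne_zero_and_third_eq {i j k : Fin 4} (h : Cyc i j k) :
    i ≠ 0 ∧ j ≠ 0 ∧ i ≠ j ∧ ∀ m : Fin 4, m ≠ 0 → m ≠ i → m ≠ j → m = k := by
  rcases h with h | h | h <;> simp only [Prod.mk.injEq] at h <;> obtain ⟨rfl, rfl, rfl⟩ := h <;>
    decide

lemma Function.update_mul_eq_mulSingle_mul {ι : Type*} [DecidableEq ι] {M : ι → Type*}
    [∀ i, MulOneClass (M i)] (x : ∀ i, M i) (i : ι) (u : M i) :
    Function.update x i (u * x i) = Pi.mulSingle i u * x := by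
  funext j
  rcases eq_or_ne j i with rfl | hj
  · simp
  · simp [hj]

lemma N_mul_of_forall_mul_conj_eq_one {v : E} (hv : ∀ k, v k * conj (v k) = 1) (x : E) :
    N (v * x) = N x :=
  Finset.sum_congr rfl fun k _ => by
    rw [Pi.mul_apply, map_mul]
    linear_combination x k * conj (x k) * hv k

lemma mulSingle_mul_conj {u : A} (hu : u * conj u = 1) (i k : Fin 4) :
    (Pi.mulSingle i u : E) k * conj ((Pi.mulSingle i u : E) k) = 1 := by
  rcases eq_or_ne k i with rfl | hk
  · rwa [Pi.mulSingle_eq_same]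
  · rw [Pi.mulSingle_eq_of_ne hk, map_one, one_mul]

lemma mulSingle_conj_mul_mulSingle {u : A} (hu : u * conj u = 1) (i : Fin 4) :
    (Pi.mulSingle i (conj u) : E) * Pi.mulSingle i u = 1 := by
  rw [← Pi.mulSingle_mul, mul_comm, hu, Pi.mulSingle_one]

lemma mulSingle_mul_e_of_ne {i k : Fin 4} (h : k ≠ i) (u : A) :
    (Pi.mulSingle i u : E) * e k = e k := by
  funext j
  rcases eq_or_ne j k with rfl | hj
  · simp [e, h]
  · simp [e, hj]

lemma mulSingle_mul_e_self (i : Fin 4) (u : A) : (Pi.mulSingle i u : E) * e i = u • e i := by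
  funext j
  rcases eq_or_ne j i with rfl | hj
  · simp [e]
  · simp [e, hj]

namespace LagrangeMul

variable {mul : E →ₗ[A0] E →ₗ[A0] E} (hL : ∀ x y : E, N (mul x y) = N x * N y)
include hL

lemma B_mul_mul_left (x y w : E) : B (mul x y) (mul x w) = N x * B y w := by
  have h := hL x (y + w)
  rw [map_add, N_add, N_add, hL, hL] at h
  linear_combination h

lemma B_mul_mul_right (x z y : E) : B (mul x y) (mul z y) = B x z * N y := by
  have h := hL (x + z) y
  rw [map_add, LinearMap.add_apply, N_add, N_add, hL, hL] at h
  linear_combination h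

lemma B_mul_mul_add_B_mul_mul (x y z w : E) :
    B (mul x y) (mul z w) + B (mul x w) (mul z y) = B x z * B y w := by
  have h := B_mul_mul_left hL (x + z) y w
  rw [map_add, LinearMap.add_apply, LinearMap.add_apply, B_add_left, B_add_right, B_add_right,
    N_add, B_mul_mul_left hL, B_mul_mul_left hL, B_comm (mul z y)] at h
  linear_combination h

variable (hid : ∀ x : E, mul (e 0) x = x ∧ mul x (e 0) = x)
include hid

lemma B_mul_add_B_mul_left (x y w : E) : B (mul x y) w + B (mul x w) y = tr x * B y w := by
  simpa only [tr, (hid _).1] using B_mul_mul_add_B_mul_mul hL x y (e 0) w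

lemma B_mul_add_B_mul_right (x y w : E) : B (mul y x) w + B y (mul w x) = B y w * tr x := by
  simpa only [tr, (hid _).2] using B_mul_mul_add_B_mul_mul hL y x w (e 0)

lemma mul_mul_left (x y : E) : mul x (mul x y) = tr x • mul x y - N x • y := by
  rw [← sub_eq_zero]
  refine eq_zero_of_forall_B_eq_zero fun w => ?_
  rw [B_sub_left, B_sub_left, B_smul_left (conj_tr x), B_smul_left (conj_N x)]
  linear_combination B_mul_add_B_mul_left hL hid x (mul x y) w - B_mul_mul_left hL x w y
    - N x * B_comm w y

lemma mul_mul_right (x y : E) : mul (mul y x) x = tr x • mul y x - N x • y := by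
  rw [← sub_eq_zero]
  refine eq_zero_of_forall_B_eq_zero fun w => ?_
  rw [B_sub_left, B_sub_left, B_smul_left (conj_tr x), B_smul_left (conj_N x)]
  linear_combination B_mul_add_B_mul_right hL hid x (mul y x) w - B_mul_mul_right hL y w x

lemma mul_self (x : E) : mul x x = tr x • x - N x • e 0 := by
  simpa only [(hid x).2] using mul_mul_left hL hid x (e 0)

lemma mul_add_mul_swap (x y : E) : mul x y + mul y x = tr y • x + tr x • y - B x y • e 0 := by
  have h := mul_self hL hid (x + y)
  simp only [map_add, LinearMap.add_apply, mul_self hL hid x, mul_self hL hid y, tr, B_add_left,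
    N_add] at h ⊢
  linear_combination (norm := module) h

lemma mul_e_mul_e {i : Fin 4} (hi : i ≠ 0) (y : E) : mul (e i) (mul (e i) y) = -y := by
  rw [mul_mul_left hL hid, tr_e hi, N_e, zero_smul, one_smul, zero_sub]

lemma mul_mul_e_e {i : Fin 4} (hi : i ≠ 0) (y : E) : mul (mul y (e i)) (e i) = -y := by
  rw [mul_mul_right hL hid, tr_e hi, N_e, zero_smul, one_smul, zero_sub]

variable {i j : Fin 4}

lemma mul_e_comm (hi : i ≠ 0) (hj : j ≠ 0) (hij : i ≠ j) :
    mul (e j) (e i) = -mul (e i) (e j) := by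
  have h := mul_add_mul_swap hL hid (e i) (e j)
  rw [tr_e hi, tr_e hj, B_e_e hij, zero_smul, zero_smul, zero_smul, add_zero, sub_zero] at h
  exact eq_neg_of_add_eq_zero_right h

lemma mul_e_mul_e_e (hi : i ≠ 0) (hj : j ≠ 0) (hij : i ≠ j) :
    mul (e j) (mul (e i) (e j)) = e i := by
  rw [← neg_neg (mul (e i) (e j)), ← mul_e_comm hL hid hi hj hij, map_neg, mul_e_mul_e hL hid hj,
    neg_neg]

lemma mul_mul_e_e_e (hi : i ≠ 0) (hj : j ≠ 0) (hij : i ≠ j) :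
    mul (mul (e i) (e j)) (e i) = e j := by
  rw [← neg_neg (mul (e i) (e j)), ← mul_e_comm hL hid hi hj hij, map_neg, LinearMap.neg_apply,
    mul_mul_e_e hL hid hi, neg_neg]

lemma B_mul_e_e_e_zero (hi : i ≠ 0) (hij : i ≠ j) : B (mul (e i) (e j)) (e 0) = 0 := by
  have h := B_mul_add_B_mul_left hL hid (e i) (e j) (e 0)
  rw [(hid _).2, B_e_e hij, add_zero] at h
  rw [h, tr_e hi, zero_mul]

lemma B_mul_e_e_e_left (hj : j ≠ 0) : B (mul (e i) (e j)) (e i) = 0 := by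
  have h := B_mul_mul_left hL (e i) (e j) (e 0)
  rw [(hid _).2] at h
  rw [h, ← tr, tr_e hj, mul_zero]

lemma B_mul_e_e_e_right (hi : i ≠ 0) : B (mul (e i) (e j)) (e j) = 0 := by
  have h := B_mul_mul_right hL (e i) (e 0) (e j)
  rw [(hid _).1] at h
  rw [h, ← tr, tr_e hi, zero_mul]

lemma exists_mul_e_e_eq_smul_e {k : Fin 4} (hi : i ≠ 0) (hj : j ≠ 0) (hij : i ≠ j)
    (hk : ∀ m : Fin 4, m ≠ 0 → m ≠ i → m ≠ j → m = k) :
    ∃ u : A, u * conj u = 1 ∧ mul (e i) (e j) = u • e k := by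
  have hN : N (mul (e i) (e j)) = 1 := by rw [hL, N_e, N_e, one_mul]
  obtain ⟨m, u, hu, hm⟩ := exists_eq_smul_e_of_N_eq_one hN
  have hne {l : Fin 4} (hl : B (mul (e i) (e j)) (e l) = 0) : m ≠ l := by
    rintro rfl
    rw [hm, B_e_right, smul_e_apply, if_pos rfl] at hl
    exact add_conj_ne_zero hu hl
  refine ⟨u, hu, ?_⟩
  rw [hm, hk m (hne (B_mul_e_e_e_zero hL hid hi hij)) (hne (B_mul_e_e_e_left hL hid hj))
    (hne (B_mul_e_e_e_right hL hid hi))]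

lemma mul_e_e_of_cyc {k : Fin 4} (h : Cyc i j k) :
    (∃ u : A, u * conj u = 1 ∧ mul (e i) (e j) = u • e k) ∧ mul (e j) (e i) = -mul (e i) (e j) :=
  have ⟨hi, hj, hij, hk⟩ := h.ne_zero_and_third_eq
  ⟨exists_mul_e_e_eq_smul_e hL hid hi hj hij hk, mul_e_comm hL hid hi hj hij⟩

lemma twisted_mul_e_e_of_cyc {u : A} (hu : u * conj u = 1) (h12 : mul (e 1) (e 2) = u • e 3)
    {i j k : Fin 4} (hc : Cyc i j k) :
    Pi.mulSingle 3 (conj u) * mul (Pi.mulSingle 3 u * e i) (Pi.mulSingle 3 u * e j) = e k ∧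
      Pi.mulSingle 3 (conj u) * mul (Pi.mulSingle 3 u * e j) (Pi.mulSingle 3 u * e i) = -e k := by
  have he3 : (Pi.mulSingle 3 u : E) * e 3 = mul (e 1) (e 2) := by
    rw [mulSingle_mul_e_self, h12]
  have hback : (Pi.mulSingle 3 (conj u) : E) * mul (e 1) (e 2) = e 3 := by
    rw [h12, mul_smul_comm, mulSingle_mul_e_self, smul_smul, hu, one_smul]
  rcases hc with h | h | h <;> simp only [Prod.mk.injEq] at h <;> obtain ⟨rfl, rfl, rfl⟩ := h <;>
    simp (disch := decide) only [mulSingle_mul_e_of_ne, he3]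
  · exact ⟨hback, by rw [mul_e_comm hL hid (i := 1) (j := 2) (by decide) (by decide) (by decide),
      mul_neg, hback]⟩
  · rw [mul_e_mul_e_e hL hid (by decide) (by decide) (by decide), mul_mul_e_e hL hid (by decide),
      mul_neg]
    simp (disch := decide) only [mulSingle_mul_e_of_ne, and_self]
  · rw [mul_mul_e_e_e hL hid (by decide) (by decide) (by decide), mul_e_mul_e hL hid (by decide),
      mul_neg]
    simp (disch := decide) only [mulSingle_mul_e_of_ne, and_self]

end LagrangeMul

/-- Lemma 4.7: for each cyclic permutation `(i,j,k)` of `(1,2,3)`,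
`eᵢ·eⱼ ∈ U₁ eₖ` and `eⱼ·eᵢ = −(eᵢ·eⱼ)`.  Moreover there is `u ∈ U₁` such that,
with `σ = σ_{(1,1,1,u)}`, the multiplication `x ⋆ y = σ⁻¹(σ(x)·σ(y))` satisfies
`eᵢ ⋆ eⱼ = eₖ = −(eⱼ ⋆ eᵢ)` for every cyclic permutation `(i,j,k)` of `(1,2,3)`,
retains the Lagrange identity, the identity element `e₀` and the property
`(a e₀) ⋆ y = a y`, and `σ : (E,⋆) → (E,·)` is an isomorphism of unital
`A₀`-algebras. -/
theorem quaternion_relations_lemma (mul : E →ₗ[A0] E →ₗ[A0] E)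
    (hL : ∀ x y : E, N (mul x y) = N x * N y)
    (hid : ∀ x : E, mul (e 0) x = x ∧ mul x (e 0) = x)
    (hA : ∀ (a : A) (y : E), mul (a • e 0) y = a • y) :
    (∀ i j k : Fin 4, Cyc i j k →
      (∃ u : A, u * conj u = 1 ∧ mul (e i) (e j) = u • e k) ∧
      mul (e j) (e i) = -mul (e i) (e j)) ∧
    ∃ u : A, u * conj u = 1 ∧
      ∀ (σ σinv : E → E) (star : E → E → E),
        σ = (fun x : E => Function.update x 3 (u * x 3)) →
        σinv = (fun x : E => Function.update x 3 (conj u * x 3)) →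
        star = (fun x y : E => σinv (mul (σ x) (σ y))) →
        σinv ∘ σ = id ∧ σ ∘ σinv = id ∧
        (∀ i j k : Fin 4, Cyc i j k →
          star (e i) (e j) = e k ∧ star (e j) (e i) = -e k) ∧
        (∀ x y : E, N (star x y) = N x * N y) ∧
        (∀ x : E, star (e 0) x = x ∧ star x (e 0) = x) ∧
        (∀ (a : A) (y : E), star (a • e 0) y = a • y) ∧
        -- `σ : (E,⋆) → (E,·)` is an isomorphism of unital `A₀`-algebras:
        Function.Bijective σ ∧
        (∀ x y : E, σ (x + y) = σ x + σ y) ∧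
        (∀ (c : A0) (x : E), σ (c • x) = c • σ x) ∧
        σ (e 0) = e 0 ∧
        (∀ x y : E, σ (star x y) = mul (σ x) (σ y)) := by
  refine ⟨fun i j k hc => LagrangeMul.mul_e_e_of_cyc hL hid hc, ?_⟩
  obtain ⟨⟨u, hu, h12⟩, -⟩ :=
    LagrangeMul.mul_e_e_of_cyc hL hid (i := 1) (j := 2) (k := 3) (Or.inl rfl)
  refine ⟨u, hu, ?_⟩
  rintro σ σinv star rfl rfl rfl
  simp only [Function.update_mul_eq_mulSingle_mul]
  set v : E := Pi.mulSingle 3 u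
  set w : E := Pi.mulSingle 3 (conj u)
  have hwv (x : E) : w * (v * x) = x := by
    rw [← mul_assoc, mulSingle_conj_mul_mulSingle hu, one_mul]
  have hvw (x : E) : v * (w * x) = x := by
    rw [mul_left_comm, hwv]
  have hv0 : v * e 0 = e 0 := mulSingle_mul_e_of_ne (by decide) u
  have hNv : ∀ x, N (v * x) = N x := N_mul_of_forall_mul_conj_eq_one (mulSingle_mul_conj hu 3)
  have hNw : ∀ x, N (w * x) = N x :=
    N_mul_of_forall_mul_conj_eq_one (mulSingle_mul_conj (by rwa [conj_conj, mul_comm]) 3)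
  refine ⟨funext hwv, funext hvw, fun _ _ _ => LagrangeMul.twisted_mul_e_e_of_cyc hL hid hu h12,
    fun x y => by rw [hNw, hL, hNv, hNv],
    fun x => ⟨by rw [hv0, (hid _).1, hwv], by rw [hv0, (hid _).2, hwv]⟩,
    fun a y => by rw [mul_smul_comm, hv0, hA, mul_smul_comm, hwv],
    Function.bijective_iff_has_inverse.mpr ⟨(w * ·), hwv, hvw⟩,
    fun x y => mul_add v x y, fun c x => mul_smul_comm c v x, hv0, fun x y => hvw _⟩
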